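/- Let W = W₁ × W₂ be a finite Coxeter group with S = S₁ ⊔ S₂. For transversal edges I ⇆ J in Q_{W₁} and K ⇆ L in Q_{W₂} the identity X_{I⊔K, J⊔K} · X_{J⊔K, J⊔L} = X_{I⊔K, I⊔L} · X_{I⊔L, J⊔L} holds in Ω(W,S); the left side equals ι₁(X_{IJ}) ι₂(X_{KL}) and the right side equals ι₂(X_{KL}) ι₁(X_{IJ}), so [ι₁(X_{IJ}), ι₂(X_{KL})] = 0. -/

import Mathlib

open scoped TensorProduct

noncomputable section

namespace WGraphPaper

variable (k : Type*) [CommRing k] {B B₁ B₂ : Type*}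

/-! ### Gyoja's W-graph algebra with coefficients in `k`
(`Omega ℤ M` is the W-graph algebra `Ω(W,S)` itself, `Omega k M` is `kΩ`). -/

/-- The free ring `k⟨e_b, x_b | b ∈ B⟩`; `Sum.inl b` encodes the generator `e_b` and
`Sum.inr b` encodes the generator `x_b`. -/
abbrev FreeGen (B : Type*) := FreeAlgebra k (B ⊕ B)

def eGen (b : B) : FreeGen k B := FreeAlgebra.ι k (Sum.inl b)
def xGen (b : B) : FreeGen k B := FreeAlgebra.ι k (Sum.inr b)

/-- `altProd a b n` is the alternating product `a * b * a * ⋯` with `n` factors. -/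
def altProd {A : Type*} [Monoid A] : A → A → ℕ → A
  | _, _, 0 => 1
  | a, b, n + 1 => a * altProd b a n

/-- The braid commutator `Δ_m(a,b) = (a b a ⋯) - (b a b ⋯)` (`m` factors each). -/
def braidComm {A : Type*} [Ring A] (m : ℕ) (a b : A) : A := altProd a b m - altProd b a m

/-- `ι(T_b) = -v⁻¹ e_b + v (1 - e_b) + x_b`, an element of `(FreeGen k B)[v,v⁻¹]`. -/
def iotaT (b : B) : LaurentPolynomial (FreeGen k B) :=
  LaurentPolynomial.C (-(eGen k b)) * LaurentPolynomial.T (-1)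
    + LaurentPolynomial.C (1 - eGen k b) * LaurentPolynomial.T 1
    + LaurentPolynomial.C (xGen k b)

/-- The coefficient of `v^n` in a Laurent polynomial. -/
def lcoeff {R : Type*} [Semiring R] (p : LaurentPolynomial R) (n : ℤ) : R :=
  (AddMonoidAlgebra.coeff p) n

/-- The defining relations of Gyoja's W-graph algebra: the relations (a) and (b) together
with the vanishing of all Laurent coefficients `y^γ(s,t)` of the braid commutators
`Δ_{m_{st}}(ι(T_s), ι(T_t))` (for `m_{st} < ∞`, i.e. `M s t ≠ 0`). -/
inductive OmegaRel (M : CoxeterMatrix B) : FreeGen k B → FreeGen k B → Prop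
  | e_idem (b : B) : OmegaRel M (eGen k b * eGen k b) (eGen k b)
  | e_comm (b b' : B) : OmegaRel M (eGen k b * eGen k b') (eGen k b' * eGen k b)
  | ex (b : B) : OmegaRel M (eGen k b * xGen k b) (xGen k b)
  | xe (b : B) : OmegaRel M (xGen k b * eGen k b) 0
  | braid (b b' : B) (h : M b b' ≠ 0) (γ : ℤ) :
      OmegaRel M (lcoeff (braidComm (M b b') (iotaT k b) (iotaT k b')) γ) 0

/-- Gyoja's W-graph algebra `Ω(W,S)` (for `k = ℤ`), resp. `kΩ(W,S)`, defined from
the Coxeter matrix of `(W,S)`. -/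
abbrev Omega (M : CoxeterMatrix B) := RingQuot (OmegaRel k M)

/-- The image of the generator `e_b` in `Ω`. -/
def eOm (M : CoxeterMatrix B) (b : B) : Omega k M :=
  RingQuot.mkRingHom (OmegaRel k M) (eGen k b)

/-- The image of the generator `x_b` in `Ω`. -/
def xOm (M : CoxeterMatrix B) (b : B) : Omega k M :=
  RingQuot.mkRingHom (OmegaRel k M) (xGen k b)

lemma commute_eOm (M : CoxeterMatrix B) (b b' : B) : Commute (eOm k M b) (eOm k M b') := by
  show _ = _
  rw [eOm, eOm, ← map_mul, ← map_mul]
  exact RingQuot.mkRingHom_rel (OmegaRel.e_comm b b')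

lemma commute_oneSubEOm (M : CoxeterMatrix B) (b b' : B) :
    Commute (1 - eOm k M b) (1 - eOm k M b') :=
  (Commute.one_left _).sub_left ((Commute.one_right _).sub_right (commute_eOm k M b b'))

variable [Fintype B] [DecidableEq B] [DecidableEq B₁] [DecidableEq B₂]

/-- The idempotent `E_I = (∏_{t ∈ I} e_t) (∏_{t ∈ S∖I} (1 - e_t))`. -/
def EOm (M : CoxeterMatrix B) (I : Finset B) : Omega k M :=
  (I.noncommProd (fun b => eOm k M b) (fun _ _ _ _ _ => commute_eOm k M _ _)) *
    ((Iᶜ).noncommProd (fun b => 1 - eOm k M b) (fun _ _ _ _ _ => commute_oneSubEOm k M _ _))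

/-- The edge element `X_{IJ}^s = E_I x_s E_J`. -/
def XOm (M : CoxeterMatrix B) (I J : Finset B) (s : B) : Omega k M :=
  EOm k M I * xOm k M s * EOm k M J

/-- `I ← J` is an edge of the compatibility graph `Q_W`: `I ∖ J ≠ ∅` and no element of
`I ∖ J` commutes (in `W`, i.e. `m_{st} = 2`) with an element of `J ∖ I`. -/
def QEdge (M : CoxeterMatrix B) (I J : Finset B) : Prop :=
  (I \ J).Nonempty ∧ ∀ s ∈ I \ J, ∀ t ∈ J \ I, M s t ≠ 2

/-- `I ⇆ J`: `I` and `J` are joined by a pair of transversal edges of `Q_W`. -/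
def Transversal (M : CoxeterMatrix B) (I J : Finset B) : Prop :=
  QEdge M I J ∧ (J \ I).Nonempty

/-- The generators of the subalgebra `Ψ(W,S)`: all `E_I` and all transversal edge
elements `X_{IJ}`. -/
def psiGens (M : CoxeterMatrix B) : Set (Omega k M) :=
  {a | ∃ I : Finset B, a = EOm k M I} ∪
    {a | ∃ I J : Finset B, ∃ s : B, Transversal M I J ∧ s ∈ I \ J ∧ a = XOm k M I J s}

/-- The subring `Ψ(W,S) ⊆ Ω(W,S)` generated by all `E_I` and all transversal edges. -/
def Psi (M : CoxeterMatrix B) : Subring (Omega k M) := Subring.closure (psiGens k M)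

/-- The subalgebra `kΨ(W,S) ⊆ kΩ(W,S)` generated by all `E_I` and all transversal edges. -/
def PsiAlg (M : CoxeterMatrix B) : Subalgebra k (Omega k M) :=
  Algebra.adjoin k (psiGens k M)

/-! ### Products of Coxeter systems -/

/-- The Coxeter matrix of the product `W₁ × W₂`, on `S = S₁ ⊔ S₂` (each element of `S₁`
commutes with each element of `S₂`). -/
def prodMatrix (M₁ : CoxeterMatrix B₁) (M₂ : CoxeterMatrix B₂) : CoxeterMatrix (B₁ ⊕ B₂) where
  M i j :=
    match i, j with
    | Sum.inl a, Sum.inl b => M₁ a b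
    | Sum.inr a, Sum.inr b => M₂ a b
    | _, _ => 2
  isSymm := by
    unfold Matrix.IsSymm
    ext i j
    rcases i with a | a <;> rcases j with b | b <;>
      simp only [Matrix.transpose_apply] <;>
      first
        | exact M₁.symmetric b a
        | exact M₂.symmetric b a
        | rfl
  diagonal i := by rcases i with a | a <;> simp [CoxeterMatrix.diagonal]
  off_diagonal i j h := by
    rcases i with a | a <;> rcases j with b | b
    · exact M₁.off_diagonal a b (by rintro rfl; exact h rfl)
    · simp
    · simp
    · exact M₂.off_diagonal a b (by rintro rfl; exact h rfl)

def inlEmb : B₁ ↪ B₁ ⊕ B₂ := ⟨Sum.inl, Sum.inl_injective⟩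
def inrEmb : B₂ ↪ B₁ ⊕ B₂ := ⟨Sum.inr, Sum.inr_injective⟩

/-- The subset `I ⊔ K` of `S = S₁ ⊔ S₂`, for `I ⊆ S₁` and `K ⊆ S₂`. -/
def fjoin (I : Finset B₁) (K : Finset B₂) : Finset (B₁ ⊕ B₂) :=
  I.map inlEmb ∪ K.map inrEmb

/-- The part `I₁ = I ∩ S₁` of a subset `I ⊆ S = S₁ ⊔ S₂`. -/
def part1 (I : Finset (B₁ ⊕ B₂)) : Finset B₁ :=
  I.preimage Sum.inl Sum.inl_injective.injOn

/-- The part `I₂ = I ∩ S₂` of a subset `I ⊆ S = S₁ ⊔ S₂`. -/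
def part2 (I : Finset (B₁ ⊕ B₂)) : Finset B₂ :=
  I.preimage Sum.inr Sum.inr_injective.injOn

variable (M₁ : CoxeterMatrix B₁) (M₂ : CoxeterMatrix B₂)

/-- `f` is the parabolic morphism `ι₁ : Ω₁ → Ω` (it sends `e_s ↦ e_s`, `x_s ↦ x_s`
for `s ∈ S₁`). -/
def Parab1Cond (f : Omega k M₁ → Omega k (prodMatrix M₁ M₂)) : Prop :=
  ∀ b : B₁, f (eOm k M₁ b) = eOm k (prodMatrix M₁ M₂) (Sum.inl b) ∧
    f (xOm k M₁ b) = xOm k (prodMatrix M₁ M₂) (Sum.inl b)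

/-- `f` is the parabolic morphism `ι₂ : Ω₂ → Ω` (it sends `e_s ↦ e_s`, `x_s ↦ x_s`
for `s ∈ S₂`). -/
def Parab2Cond (f : Omega k M₂ → Omega k (prodMatrix M₁ M₂)) : Prop :=
  ∀ b : B₂, f (eOm k M₂ b) = eOm k (prodMatrix M₁ M₂) (Sum.inr b) ∧
    f (xOm k M₂ b) = xOm k (prodMatrix M₁ M₂) (Sum.inr b)

/-- `t` is the morphism `τ : Ω → Ω₁ ⊗ Ω₂` of the paper: it sends `e_s ↦ e_s ⊗ 1`,
`x_s ↦ x_s ⊗ 1` for `s ∈ S₁` and `e_s ↦ 1 ⊗ e_s`, `x_s ↦ 1 ⊗ x_s` for `s ∈ S₂`. -/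
def TauCond (t : Omega k (prodMatrix M₁ M₂) → Omega k M₁ ⊗[k] Omega k M₂) : Prop :=
  (∀ b : B₁, t (eOm k (prodMatrix M₁ M₂) (Sum.inl b)) = eOm k M₁ b ⊗ₜ[k] 1 ∧
      t (xOm k (prodMatrix M₁ M₂) (Sum.inl b)) = xOm k M₁ b ⊗ₜ[k] 1) ∧
  (∀ b : B₂, t (eOm k (prodMatrix M₁ M₂) (Sum.inr b)) = 1 ⊗ₜ[k] eOm k M₂ b ∧
      t (xOm k (prodMatrix M₁ M₂) (Sum.inr b)) = 1 ⊗ₜ[k] xOm k M₂ b)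



/-- The coefficientwise extension of a ring homomorphism to Laurent polynomial rings. -/
def laurentMap {R A : Type*} [Semiring R] [Semiring A] (f : R →+* A) :
    LaurentPolynomial R →+* LaurentPolynomial A :=
  AddMonoidAlgebra.liftNCRingHom (LaurentPolynomial.C.comp f)
    { toFun := fun n => LaurentPolynomial.T (Multiplicative.toAdd n)
      map_one' := LaurentPolynomial.T_zero
      map_mul' := fun _ _ => LaurentPolynomial.T_add _ _ }
    (fun _ n => (LaurentPolynomial.commute_T (Multiplicative.toAdd n) _).symm)

/-- `k` is a good ring for `(W,S)`: it contains `2cos(2π/m_{st})` for all `s,t ∈ S`. -/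
def GoodRing (M : CoxeterMatrix B) (k : Subring ℂ) : Prop :=
  ∀ i j : B, M i j ≠ 0 → (2 * Complex.cos (2 * Real.pi / (M i j : ℂ))) ∈ k

/-- The irreducible complex characters of a finite group `G`. -/
def IrrChar (G : Type) [Group G] : Type :=
  {χ : G → ℂ // ∃ V : FDRep ℂ G, CategoryTheory.Simple V ∧ χ = FDRep.character V}

/-- The degree `d_λ` of an irreducible character `λ` (its value at `1`). -/
def IrrChar.degree {G : Type} [Group G] (χ : IrrChar G) : ℕ := ⌊(χ.val 1).re⌋₊

variable {ι : Type*}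

/-- (Z1): the `F^λ` are a decomposition of the identity into orthogonal idempotents. -/
def Z1 {A : Type*} [Ring A] (F : ι → A) : Prop :=
  (∀ l, F l * F l = F l) ∧ (∀ l m, l ≠ m → F l * F m = 0) ∧ ∑ᶠ l, F l = 1

variable [Fintype B] [DecidableEq B]

/-- (Z2): the decomposition is compatible with the one coming from the path-algebra
structure: `E_I F^λ = F^λ E_I`. -/
def Z2 (M : CoxeterMatrix B) (F : ι → Omega k M) : Prop :=
  ∀ l (I : Finset B), EOm k M I * F l = F l * EOm k M I

/-- (Z3), with a specified partial order `le`: only "downward edges" exist,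
i.e. `F^λ Ω F^μ ≠ 0 → λ ⪯ μ`. -/
def Z3At {A : Type*} [Ring A] (F : ι → A) (le : ι → ι → Prop) : Prop :=
  ∀ l m, (∃ a : A, F l * a * F m ≠ 0) → le l m

/-- (Z3): there is a partial order on `Irr(W)` such that only "downward edges" exist. -/
def Z3 {A : Type*} [Ring A] (F : ι → A) : Prop :=
  ∃ le : ι → ι → Prop, IsPartialOrder ι le ∧ Z3At F le

/-- (Z4): there are surjective `k`-algebra morphisms `k^{d_λ×d_λ} ↠ F^λ kΩ F^λ`. -/
def Z4 (M : CoxeterMatrix B) (F : ι → Omega k M) (d : ι → ℕ) : Prop :=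
  ∀ l, ∃ ψ : Matrix (Fin (d l)) (Fin (d l)) k →ₗ[k] Omega k M,
    (∀ x y, ψ (x * y) = ψ x * ψ y) ∧ ψ 1 = F l ∧
      Set.range ψ = {z | ∃ a : Omega k M, z = F l * a * F l}

/-- (Z5): `F^λ X_{IJ} F^λ ∈ kΨ(W,S)` for all edges `I ← J` of `Q_W`. -/
def Z5 (M : CoxeterMatrix B) (F : ι → Omega k M) : Prop :=
  ∀ l (I J : Finset B) (s : B), QEdge M I J → s ∈ I \ J →
    F l * XOm k M I J s * F l ∈ PsiAlg k M

/-- (Z6): `F^λ ∈ kΨ(W,S)`. -/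
def Z6 (M : CoxeterMatrix B) (F : ι → Omega k M) : Prop :=
  ∀ l, F l ∈ PsiAlg k M

/-- The family satisfies all of (Z1)–(Z6), i.e. the strong W-graph decomposition
conjecture holds via this family (`d` is the degree function on `Irr(W)`). -/
def StrongZ (M : CoxeterMatrix B) (F : ι → Omega k M) (d : ι → ℕ) : Prop :=
  Z1 F ∧ Z2 k M F ∧ Z3 F ∧ Z4 k M F d ∧ Z5 k M F ∧ Z6 k M F

/-- The maximal length (number of steps) of a strict chain for the relation `le`. -/
def orderHeight (le : ι → ι → Prop) : ℕ :=
  sSup {n | ∃ c : Fin (n + 1) → ι, Function.Injective c ∧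
    ∀ i j : Fin (n + 1), i < j → le (c i) (c j)}



/-!
Write `Z = ι₁(X_{IJ}) = A_I x_s A_J` and `Z' = ι₂(X_{KL}) = P_K x_u P_L`, where `A_I` and `P_K` are
the `S₁`- and `S₂`-factors of the idempotents, so that `E_{I⊔K} = A_I P_K`. For `s ∈ S₁`, `t ∈ S₂`
we have `m_{st} = 2`, and the braid relation yields `e_t x_s = x_s e_t + e_s x_t (1 - e_s)`,
`(1 - e_s) x_t e_s = 0` and `x_s x_t = x_t x_s`. Pick `s₁ ∈ J ∖ I`: then `A_I g A_J = 0` for every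
`g` with `(1 - e_{s₁}) g e_{s₁} = 0`, a subring containing all `e_b` and all `x_t`, `t ∈ S₂`. This
kills the correction term when `e_t` is moved across `A_I x_s`, so everything in the subring
generated by the `e_t` moves from the right of `A_I x_s` to its left inside `A_I x_s ⋯ A_J`. Hence
`Z` commutes with every `P_N`, symmetrically `Z'` with every `A_N`, and `Z Z'` and `Z' Z` both
reduce to `A_I P_K x_s x_u A_J P_L`; the products of the `X_{I⊔K, …}` collapse to `Z Z'` and `Z' Z`.
-/

section IdempotentProducts

open Finset

variable {R : Type*} [Ring R] {C : Type*} [Fintype C] [DecidableEq C]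

/-- For `e = eOm k M` this is `EOm k M I`. -/
def idemProd (e : C → R) (he : ∀ a b, Commute (e a) (e b)) (I : Finset C) : R :=
  I.noncommProd e (Set.pairwise_of_forall _ _ he) *
    Iᶜ.noncommProd (fun c => 1 - e c) (Set.pairwise_of_forall _ _ fun a b =>
      (Commute.one_left _).sub_left ((Commute.one_right _).sub_right (he a b)))

variable {e : C → R} {he : ∀ a b, Commute (e a) (e b)} {I : Finset C}

theorem idemProd_induction (p : R → Prop) (mul : ∀ a b, p a → p b → p (a * b)) (one : p 1)
    (mem : ∀ c ∈ I, p (e c)) (notMem : ∀ c ∉ I, p (1 - e c)) : p (idemProd e he I) :=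
  mul _ _ (noncommProd_induction _ _ _ p mul one mem)
    (noncommProd_induction _ _ _ p mul one fun c hc => notMem c (mem_compl.1 hc))

theorem commute_idemProd {z : R} (hz : ∀ c, Commute z (e c)) : Commute z (idemProd e he I) :=
  idemProd_induction (Commute z) (fun _ _ => Commute.mul_right) (Commute.one_right z)
    (fun c _ => hz c) (fun c _ => (Commute.one_right z).sub_right (hz c))

theorem idemProd_mem {S : Subring R} (hS : ∀ c, e c ∈ S) : idemProd e he I ∈ S :=
  idemProd_induction (· ∈ S) (fun _ _ => mul_mem) (one_mem S) (fun c _ => hS c)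
    (fun c _ => sub_mem (one_mem S) (hS c))

theorem idemProd_mul_of_mem {c : C} (hc : c ∈ I) (hidem : IsIdempotentElem (e c)) :
    idemProd e he I * e c = idemProd e he I := by
  have hI : I.noncommProd e (Set.pairwise_of_forall _ _ he) * e c =
      I.noncommProd e (Set.pairwise_of_forall _ _ he) := by
    conv_lhs => rw [← noncommProd_erase_mul I hc, mul_assoc, hidem.eq]
    exact noncommProd_erase_mul I hc _ _
  rw [idemProd, mul_assoc, ← (noncommProd_commute _ _ _ (e c) fun d _ =>
      (Commute.one_right _).sub_right (he c d)).eq, ← mul_assoc, hI]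

theorem idemProd_mul_of_notMem {c : C} (hc : c ∉ I) (hidem : IsIdempotentElem (e c)) :
    idemProd e he I * e c = 0 := by
  rw [idemProd, mul_assoc, ← noncommProd_erase_mul Iᶜ (mem_compl.2 hc), mul_assoc, sub_mul,
    one_mul, hidem.eq, sub_self, mul_zero, mul_zero]

theorem isIdempotentElem_idemProd (hidem : ∀ c, IsIdempotentElem (e c)) :
    IsIdempotentElem (idemProd e he I) :=
  idemProd_induction (idemProd e he I * · = idemProd e he I)
    (fun a b ha hb => by rw [← mul_assoc, ha, hb]) (mul_one _)
    (fun c hc => idemProd_mul_of_mem hc (hidem c))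
    (fun c hc => by rw [mul_sub, mul_one, idemProd_mul_of_notMem hc (hidem c), sub_zero])

theorem map_idemProd {S : Type*} [Ring S] (f : R →+* S) :
    f (idemProd e he I) = idemProd (f ∘ e) (fun a b => (he a b).map f) I := by
  rw [idemProd, idemProd, map_mul, map_noncommProd, map_noncommProd]
  simp only [map_sub, map_one, Function.comp_apply]

end IdempotentProducts

section Peirce

variable {R : Type*} [Ring R]

/-- The elements `g` with `(1 - f) g f = 0`, i.e. with `g (f R) ⊆ f R`: those whose
`(1 - f) R f`-component in the Peirce decomposition along `f` vanishes. -/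
def upperPeirce (f : R) (hf : IsIdempotentElem f) : Subring R where
  carrier := {g | (1 - f) * g * f = 0}
  mul_mem' {g h} (hg : _ = 0) (hh : _ = 0) := show _ = 0 by
    calc (1 - f) * (g * h) * f = (1 - f) * g * f * (h * f) + (1 - f) * g * ((1 - f) * h * f) := by
          noncomm_ring
      _ = 0 := by rw [hg, hh, zero_mul, mul_zero, add_zero]
  one_mem' := show _ = 0 by rw [mul_one, sub_mul, one_mul, hf.eq, sub_self]
  add_mem' {g h} (hg : _ = 0) (hh : _ = 0) := show _ = 0 by rw [mul_add, add_mul, hg, hh, add_zero]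
  zero_mem' := show _ = 0 by rw [mul_zero, zero_mul]
  neg_mem' {g} (hg : _ = 0) := show _ = 0 by rw [mul_neg, neg_mul, hg, neg_zero]

variable {f : R} {hf : IsIdempotentElem f}

theorem mem_upperPeirce {g : R} : g ∈ upperPeirce f hf ↔ (1 - f) * g * f = 0 := Iff.rfl

theorem mem_upperPeirce_of_commute {g : R} (hg : Commute g f) : g ∈ upperPeirce f hf := by
  rw [mem_upperPeirce, mul_assoc, hg.eq, ← mul_assoc, sub_mul, one_mul, hf.eq, sub_self, zero_mul]

theorem mul_mul_eq_zero_of_mem_upperPeirce {a b g : R} (ha : a * f = 0) (hb : f * b = b)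
    (hg : g ∈ upperPeirce f hf) : a * g * b = 0 :=
  calc a * g * b = (a - a * f) * g * (f * b) := by rw [ha, sub_zero, hb]
    _ = a * ((1 - f) * g * f) * b := by noncomm_ring
    _ = 0 := by rw [mem_upperPeirce.1 hg, mul_zero, zero_mul]

theorem mul_mul_mul_eq_of_mem_closure {U : Subring R} {G : Set R} {c d : R} (hGU : G ⊆ U)
    (hG : ∀ e ∈ G, ∀ Y ∈ U, c * e * Y * d = e * c * Y * d) {g : R}
    (hg : g ∈ Subring.closure G) : ∀ Y ∈ U, c * g * Y * d = g * c * Y * d := by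
  induction hg using Subring.closure_induction with
  | mem e he => exact hG e he
  | zero => simp
  | one => simp
  | add g h _ _ hg hh =>
    intro Y hY
    simp only [mul_add, add_mul, hg Y hY, hh Y hY]
  | neg g _ hg =>
    intro Y hY
    simp only [mul_neg, neg_mul, hg Y hY]
  | mul g h _ hh_mem hg hh =>
    intro Y hY
    calc c * (g * h) * Y * d = c * g * (h * Y) * d := by noncomm_ring
      _ = g * (c * h * Y * d) := by
        rw [hg _ (mul_mem (Subring.closure_le.2 hGU hh_mem) hY)]; noncomm_ring
      _ = g * h * c * Y * d := by rw [hh Y hY]; noncomm_ring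

end Peirce

section CrossPair

variable {R : Type*} [Ring R] {e f x y : R}

-- `(e, x, f, y) = (e_s, x_s, e_t, x_t)` with `m_{st} = 2`; `hrel` is the `v⁻¹`-coefficient of the
-- braid relation.

theorem oneSub_mul_mul_eq_zero_of_cross (hf : IsIdempotentElem f) (hef : Commute e f)
    (hyf : y * f = 0) (hrel : e * y + x * f = f * x + y * e) : (1 - f) * x * f = 0 := by
  have h := congrArg (fun z => (1 - f) * z * f) hrel
  have hey : (1 - f) * (e * y) * f = 0 := by simp only [mul_assoc, hyf, mul_zero]
  have hxf : (1 - f) * (x * f) * f = (1 - f) * x * f := by simp only [mul_assoc, hf.eq]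
  have hfx : (1 - f) * (f * x) * f = 0 := by
    rw [← mul_assoc, sub_mul, one_mul, hf.eq, sub_self, zero_mul, zero_mul]
  have hye : (1 - f) * (y * e) * f = 0 := by
    rw [mul_assoc, mul_assoc y, hef.eq, ← mul_assoc y, hyf, zero_mul, mul_zero]
  simp only [mul_add, add_mul, hey, hxf, hfx, hye, zero_add, add_zero] at h
  exact h

theorem mul_eq_of_cross (he : IsIdempotentElem e) (hef : Commute e f) (hxe : x * e = 0)
    (hrel : e * y + x * f = f * x + y * e) : f * x = x * f + e * y * (1 - e) := by
  have hye : y * e = e * y * e := by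
    rw [← sub_eq_zero, ← oneSub_mul_mul_eq_zero_of_cross he hef.symm hxe hrel.symm]
    noncomm_ring
  calc f * x = e * y + x * f - y * e := by rw [hrel]; abel
    _ = x * f + e * y * (1 - e) := by rw [hye]; noncomm_ring

end CrossPair

theorem mul_sandwich_eq {R : Type*} [Ring R] {a b p q x y : R} (hb : IsIdempotentElem b)
    (hp : IsIdempotentElem p) (hap : Commute a p) (hbp : Commute b p) (hbq : Commute b q)
    (hZp : Commute (a * x * b) p) (hZ'b : Commute (p * y * q) b) :
    a * p * x * (b * p) * (b * p * y * (b * q)) = a * x * b * (p * y * q) := by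
  have h₁ : a * p * x * (b * p) = a * x * b * p :=
    calc a * p * x * (b * p) = p * (a * x * b) * p := by rw [hap.eq]; noncomm_ring
      _ = a * x * b * p * p := by rw [← hZp.eq]
      _ = a * x * b * p := by rw [mul_assoc (a * x * b), hp.eq]
  have h₂ : b * p * y * (b * q) = b * (p * y * q) :=
    calc b * p * y * (b * q) = b * (p * y * q * b) := by rw [hbq.eq]; noncomm_ring
      _ = b * (p * y * q) := by rw [hZ'b.eq, ← mul_assoc, hb.eq]
  calc a * p * x * (b * p) * (b * p * y * (b * q)) = a * x * b * (p * b) * (p * y * q) := by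
        rw [h₁, h₂]; noncomm_ring
    _ = a * x * (b * b) * (p * p) * y * q := by rw [← hbp.eq]; noncomm_ring
    _ = a * x * b * (p * y * q) := by rw [hb.eq, hp.eq]; noncomm_ring

section Relations

open LaurentPolynomial

variable {k : Type*} [CommRing k] {B : Type*} {M : CoxeterMatrix B}

theorem isIdempotentElem_eOm (b : B) : IsIdempotentElem (eOm k M b) := by
  rw [IsIdempotentElem, eOm, ← map_mul]
  exact RingQuot.mkRingHom_rel (OmegaRel.e_idem b)

theorem xOm_mul_eOm_self (b : B) : xOm k M b * eOm k M b = 0 := by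
  rw [eOm, xOm, ← map_mul, ← map_zero (RingQuot.mkRingHom (OmegaRel k M))]
  exact RingQuot.mkRingHom_rel (OmegaRel.xe b)

theorem braidComm_two {A : Type*} [Ring A] (p q : A) : braidComm 2 p q = p * q - q * p := by
  simp [braidComm, altProd]

theorem iotaT_eq_single (b : B) :
    iotaT k b = AddMonoidAlgebra.single (-1) (-eGen k b) + AddMonoidAlgebra.single 1 (1 - eGen k b)
      + AddMonoidAlgebra.single 0 (xGen k b) := by
  rw [iotaT, ← single_eq_C_mul_T, ← single_eq_C_mul_T, ← single_eq_C]

theorem mkRingHom_lcoeff_iotaT_commutator {s t : B} (h : M s t = 2) (γ : ℤ) :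
    RingQuot.mkRingHom (OmegaRel k M) (lcoeff (iotaT k s * iotaT k t - iotaT k t * iotaT k s) γ)
      = 0 := by
  rw [← braidComm_two, ← h, ← map_zero (RingQuot.mkRingHom (OmegaRel k M))]
  exact RingQuot.mkRingHom_rel (OmegaRel.braid s t (by rw [h]; norm_num) γ)

theorem lcoeff_single {R : Type*} [Semiring R] (n m : ℤ) (r : R) :
    lcoeff (AddMonoidAlgebra.single n r : LaurentPolynomial R) m = if n = m then r else 0 :=
  Finsupp.single_apply

theorem lcoeff_sub {R : Type*} [Ring R] (p q : LaurentPolynomial R) (n : ℤ) :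
    lcoeff (p - q) n = lcoeff p n - lcoeff q n :=
  Finsupp.sub_apply p.coeff q.coeff n

theorem lcoeff_add {R : Type*} [Semiring R] (p q : LaurentPolynomial R) (n : ℤ) :
    lcoeff (p + q) n = lcoeff p n + lcoeff q n :=
  Finsupp.add_apply p.coeff q.coeff n

theorem eOm_mul_xOm_add_xOm_mul_eOm_of_eq_two {s t : B} (h : M s t = 2) :
    eOm k M s * xOm k M t + xOm k M s * eOm k M t =
      eOm k M t * xOm k M s + xOm k M t * eOm k M s := by
  have hrel := mkRingHom_lcoeff_iotaT_commutator (k := k) h (-1)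
  simp only [iotaT_eq_single, add_mul, mul_add, AddMonoidAlgebra.single_mul_single, lcoeff_sub,
    lcoeff_add, lcoeff_single] at hrel
  norm_num [← eOm.eq_1, ← xOm.eq_1] at hrel
  rw [sub_eq_zero, ← neg_add, ← neg_add, neg_inj] at hrel
  rw [add_comm, hrel, add_comm]

theorem commute_xOm_of_eq_two {s t : B} (h : M s t = 2) : Commute (xOm k M s) (xOm k M t) := by
  have hrel := mkRingHom_lcoeff_iotaT_commutator (k := k) h 0
  simp only [iotaT_eq_single, add_mul, mul_add, AddMonoidAlgebra.single_mul_single, lcoeff_sub,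
    lcoeff_add, lcoeff_single] at hrel
  norm_num [← eOm.eq_1, ← xOm.eq_1] at hrel
  simp only [sub_mul, mul_sub, one_mul, mul_one, (commute_eOm k M t s).eq] at hrel
  rw [Commute, SemiconjBy, ← sub_eq_zero, ← hrel]
  abel

end Relations

section CommutingGenerators

variable {k : Type*} [CommRing k] {B : Type*} {M : CoxeterMatrix B}

theorem eOm_mem_upperPeirce (b b' : B) :
    eOm k M b ∈ upperPeirce (eOm k M b') (isIdempotentElem_eOm b') :=
  mem_upperPeirce_of_commute (commute_eOm k M b b')

theorem xOm_mem_upperPeirce_of_eq_two {s t : B} (h : M s t = 2) :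
    xOm k M s ∈ upperPeirce (eOm k M t) (isIdempotentElem_eOm t) :=
  oneSub_mul_mul_eq_zero_of_cross (isIdempotentElem_eOm t) (commute_eOm k M s t)
    (xOm_mul_eOm_self t) (eOm_mul_xOm_add_xOm_mul_eOm_of_eq_two h)

theorem eOm_mul_xOm_of_eq_two {s t : B} (h : M s t = 2) :
    eOm k M t * xOm k M s = xOm k M s * eOm k M t + eOm k M s * xOm k M t * (1 - eOm k M s) :=
  mul_eq_of_cross (isIdempotentElem_eOm s) (commute_eOm k M s t) (xOm_mul_eOm_self s)
    (eOm_mul_xOm_add_xOm_mul_eOm_of_eq_two h)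

variable {s s₁ t : B} {a b : Omega k M}

theorem mul_xOm_mul_eOm_mul_mul_eq (hst : M s t = 2) (hts₁ : M t s₁ = 2)
    (ha : Commute a (eOm k M t)) (has : a * eOm k M s = a) (has₁ : a * eOm k M s₁ = 0)
    (hb : eOm k M s₁ * b = b) {Y : Omega k M}
    (hY : Y ∈ upperPeirce (eOm k M s₁) (isIdempotentElem_eOm s₁)) :
    a * xOm k M s * eOm k M t * Y * b = eOm k M t * a * xOm k M s * Y * b := by
  have hkill : a * (xOm k M t * (1 - eOm k M s) * Y) * b = 0 :=
    mul_mul_eq_zero_of_mem_upperPeirce has₁ hb <|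
      mul_mem (mul_mem (xOm_mem_upperPeirce_of_eq_two hts₁)
        (sub_mem (one_mem _) (eOm_mem_upperPeirce s s₁))) hY
  have hx : xOm k M s * eOm k M t =
      eOm k M t * xOm k M s - eOm k M s * xOm k M t * (1 - eOm k M s) := by
    rw [eOm_mul_xOm_of_eq_two hst]; abel
  calc a * xOm k M s * eOm k M t * Y * b
      = a * eOm k M t * xOm k M s * Y * b
        - a * eOm k M s * (xOm k M t * (1 - eOm k M s) * Y) * b := by
        rw [mul_assoc a, hx, mul_sub, sub_mul, sub_mul]; simp only [mul_assoc]
    _ = eOm k M t * a * xOm k M s * Y * b := by rw [has, hkill, sub_zero, ha.eq]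

end CommutingGenerators

section PartialIdempotents

open Finset

variable (k : Type*) [CommRing k] {B : Type*} (M : CoxeterMatrix B)
  {C : Type*} [Fintype C] [DecidableEq C]

/-- `E_I` built from the generators `e_{φ c}`, `c ∈ C`: for `φ = id` it is `EOm k M I`, and for
`W = W₁ × W₂` and `φ = Sum.inl` it is `ι₁(E_I)`. -/
def partialEOm (φ : C → B) (I : Finset C) : Omega k M :=
  idemProd (fun c => eOm k M (φ c)) (fun _ _ => commute_eOm k M _ _) I

def partialXOm (φ : C → B) (I J : Finset C) (s : C) : Omega k M :=
  partialEOm k M φ I * xOm k M (φ s) * partialEOm k M φ J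

variable {k M} {φ : C → B} {I : Finset C} {c : C}

theorem commute_eOm_partialEOm (b : B) : Commute (eOm k M b) (partialEOm k M φ I) :=
  commute_idemProd fun _ => commute_eOm k M _ _

theorem commute_partialEOm {D : Type*} [Fintype D] [DecidableEq D] {ψ : D → B} (K : Finset D) :
    Commute (partialEOm k M φ I) (partialEOm k M ψ K) :=
  commute_idemProd fun d => (commute_eOm_partialEOm (ψ d)).symm

theorem isIdempotentElem_partialEOm : IsIdempotentElem (partialEOm k M φ I) :=
  isIdempotentElem_idemProd fun _ => isIdempotentElem_eOm _

theorem partialEOm_mul_eOm_of_mem (hc : c ∈ I) :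
    partialEOm k M φ I * eOm k M (φ c) = partialEOm k M φ I :=
  idemProd_mul_of_mem hc (isIdempotentElem_eOm _)

theorem partialEOm_mul_eOm_of_notMem (hc : c ∉ I) : partialEOm k M φ I * eOm k M (φ c) = 0 :=
  idemProd_mul_of_notMem hc (isIdempotentElem_eOm _)

theorem eOm_mul_partialEOm_of_mem (hc : c ∈ I) :
    eOm k M (φ c) * partialEOm k M φ I = partialEOm k M φ I := by
  rw [(commute_eOm_partialEOm _).eq, partialEOm_mul_eOm_of_mem hc]

theorem partialEOm_mem_closure :
    partialEOm k M φ I ∈ Subring.closure (eOm k M '' Set.range φ) :=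
  idemProd_mem fun c => Subring.subset_closure ⟨φ c, ⟨c, rfl⟩, rfl⟩

theorem partialEOm_mem_upperPeirce (b : B) :
    partialEOm k M φ I ∈ upperPeirce (eOm k M b) (isIdempotentElem_eOm b) :=
  mem_upperPeirce_of_commute (commute_eOm_partialEOm b).symm

end PartialIdempotents

section OrthogonalGenerators

open Finset

variable {k : Type*} [CommRing k] {B : Type*} {M : CoxeterMatrix B}
  {C D : Type*} [Fintype C] [DecidableEq C] {φ : C → B} {ψ : D → B} {I J : Finset C} {s s₁ : C}

theorem partialEOm_mul_xOm_mul_mul_eq (hφψ : ∀ c d, M (φ c) (ψ d) = 2) (hs : s ∈ I)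
    (hs₁ : s₁ ∈ J \ I) {g : Omega k M} (hg : g ∈ Subring.closure (eOm k M '' Set.range ψ))
    {Y : Omega k M} (hY : Y ∈ upperPeirce (eOm k M (φ s₁)) (isIdempotentElem_eOm _)) :
    partialEOm k M φ I * xOm k M (φ s) * g * Y * partialEOm k M φ J =
      g * partialEOm k M φ I * xOm k M (φ s) * Y * partialEOm k M φ J := by
  rw [mul_assoc g]
  refine mul_mul_mul_eq_of_mem_closure (c := partialEOm k M φ I * xOm k M (φ s))
    (d := partialEOm k M φ J) (by rintro _ ⟨t, -, rfl⟩; exact eOm_mem_upperPeirce t _)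
    (by
      rintro _ ⟨_, ⟨d, rfl⟩, rfl⟩ Y hY
      rw [← mul_assoc]
      exact mul_xOm_mul_eOm_mul_mul_eq (hφψ s d) (by rw [M.symmetric]; exact hφψ s₁ d)
        (commute_eOm_partialEOm _).symm (partialEOm_mul_eOm_of_mem hs)
        (partialEOm_mul_eOm_of_notMem (mem_sdiff.1 hs₁).2)
        (eOm_mul_partialEOm_of_mem (mem_sdiff.1 hs₁).1) hY) hg Y hY

variable [Fintype D] [DecidableEq D]

theorem commute_partialXOm_partialEOm (hφψ : ∀ c d, M (φ c) (ψ d) = 2) (hs : s ∈ I)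
    (hs₁ : s₁ ∈ J \ I) (N : Finset D) :
    Commute (partialXOm k M φ I J s) (partialEOm k M ψ N) := by
  have hmove := partialEOm_mul_xOm_mul_mul_eq hφψ hs hs₁
    (partialEOm_mem_closure (k := k) (M := M) (I := N)) (one_mem _)
  rw [mul_one, mul_one] at hmove
  calc partialXOm k M φ I J s * partialEOm k M ψ N
      = partialEOm k M φ I * xOm k M (φ s) * partialEOm k M ψ N * partialEOm k M φ J := by
        rw [partialXOm, mul_assoc _ (partialEOm k M φ J), (commute_partialEOm N).eq, ← mul_assoc]
    _ = partialEOm k M ψ N * partialXOm k M φ I J s := by rw [hmove, partialXOm]; noncomm_ring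

variable {K L : Finset D} {u t₁ : D}

theorem commute_partialXOm_partialXOm (hφψ : ∀ c d, M (φ c) (ψ d) = 2) (hs : s ∈ I)
    (hs₁ : s₁ ∈ J \ I) (hu : u ∈ K) (ht₁ : t₁ ∈ L \ K) :
    Commute (partialXOm k M φ I J s) (partialXOm k M ψ K L u) := by
  have hψφ : ∀ d c, M (ψ d) (φ c) = 2 := fun d c => by rw [M.symmetric]; exact hφψ c d
  have hZZ' : partialXOm k M φ I J s * partialXOm k M ψ K L u =
      partialEOm k M ψ K * partialEOm k M φ I * xOm k M (φ s) *
        (xOm k M (ψ u) * partialEOm k M ψ L) * partialEOm k M φ J := by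
    rw [← partialEOm_mul_xOm_mul_mul_eq hφψ hs hs₁ partialEOm_mem_closure
      (mul_mem (xOm_mem_upperPeirce_of_eq_two (hψφ u s₁)) (partialEOm_mem_upperPeirce _))]
    rw [partialXOm, mul_assoc _ _ (partialXOm k M ψ K L u),
      ← (commute_partialXOm_partialEOm hψφ hu ht₁ J).eq, partialXOm]
    noncomm_ring
  have hZ'Z : partialXOm k M ψ K L u * partialXOm k M φ I J s =
      partialEOm k M φ I * partialEOm k M ψ K * xOm k M (ψ u) *
        (xOm k M (φ s) * partialEOm k M φ J) * partialEOm k M ψ L := by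
    rw [← partialEOm_mul_xOm_mul_mul_eq hψφ hu ht₁ partialEOm_mem_closure
      (mul_mem (xOm_mem_upperPeirce_of_eq_two (hφψ s t₁)) (partialEOm_mem_upperPeirce _))]
    rw [partialXOm, mul_assoc _ _ (partialXOm k M φ I J s),
      ← (commute_partialXOm_partialEOm hφψ hs hs₁ L).eq, partialXOm]
    noncomm_ring
  rw [Commute, SemiconjBy, hZZ', hZ'Z]
  calc partialEOm k M ψ K * partialEOm k M φ I * xOm k M (φ s) *
        (xOm k M (ψ u) * partialEOm k M ψ L) * partialEOm k M φ J
      = (partialEOm k M ψ K * partialEOm k M φ I) * (xOm k M (φ s) * xOm k M (ψ u)) *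
          (partialEOm k M ψ L * partialEOm k M φ J) := by noncomm_ring
    _ = (partialEOm k M φ I * partialEOm k M ψ K) * (xOm k M (ψ u) * xOm k M (φ s)) *
          (partialEOm k M φ J * partialEOm k M ψ L) := by
      rw [(commute_partialEOm I).eq, (commute_xOm_of_eq_two (hφψ s u)).eq,
        (commute_partialEOm J).eq]
    _ = _ := by noncomm_ring

end OrthogonalGenerators

theorem map_XOm {B C : Type*} [Fintype C] [DecidableEq C] {k : Type*} [CommRing k]
    {M' : CoxeterMatrix C} {M : CoxeterMatrix B} [Fintype B] [DecidableEq B] {φ : C → B}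
    (f : Omega k M' →+* Omega k M)
    (hf : ∀ c, f (eOm k M' c) = eOm k M (φ c) ∧ f (xOm k M' c) = xOm k M (φ c))
    (I J : Finset C) (s : C) : f (XOm k M' I J s) = partialXOm k M φ I J s := by
  have hE : ∀ I : Finset C, f (EOm k M' I) = partialEOm k M φ I := fun I => by
    change f (idemProd (eOm k M') (commute_eOm k M') I) = _
    rw [map_idemProd, partialEOm]
    congr 1 with c
    exact (hf c).1
  rw [XOm, map_mul, map_mul, hE, hE, (hf s).2, partialXOm]

section Products

open Finset

variable {k : Type*} [CommRing k] {B₁ B₂ : Type*}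

theorem noncommProd_map_embedding {α β M : Type*} [Monoid M] (s : Finset α) (g : α ↪ β)
    (f : β → M) (comm : ∀ a b, Commute (f a) (f b)) :
    (s.map g).noncommProd f (Set.pairwise_of_forall _ _ comm) =
      s.noncommProd (fun a => f (g a)) (Set.pairwise_of_forall _ _ fun _ _ => comm _ _) := by
  simp only [noncommProd, map_val, Multiset.map_map]
  rfl

theorem disjoint_map_inlEmb_map_inrEmb (I : Finset B₁) (K : Finset B₂) :
    Disjoint (I.map inlEmb) (K.map inrEmb) := by
  simp [disjoint_left, inlEmb, inrEmb]

variable [DecidableEq B₁] [DecidableEq B₂]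

theorem noncommProd_fjoin {M : Type*} [Monoid M] (f : B₁ ⊕ B₂ → M)
    (comm : ∀ a b, Commute (f a) (f b)) (I : Finset B₁) (K : Finset B₂) :
    (fjoin I K).noncommProd f (Set.pairwise_of_forall _ _ comm) =
      I.noncommProd (fun c => f (Sum.inl c)) (Set.pairwise_of_forall _ _ fun _ _ => comm _ _) *
        K.noncommProd (fun d => f (Sum.inr d))
          (Set.pairwise_of_forall _ _ fun _ _ => comm _ _) := by
  rw [fjoin, noncommProd_union_of_disjoint (disjoint_map_inlEmb_map_inrEmb I K)]
  exact congrArg₂ (· * ·) (noncommProd_map_embedding I inlEmb f comm)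
    (noncommProd_map_embedding K inrEmb f comm)

variable [Fintype B₁] [Fintype B₂]

theorem compl_fjoin (I : Finset B₁) (K : Finset B₂) : (fjoin I K)ᶜ = fjoin Iᶜ Kᶜ := by
  ext (c | c) <;> simp [fjoin, inlEmb, inrEmb]

theorem idemProd_fjoin {R : Type*} [Ring R] (e : B₁ ⊕ B₂ → R) (he : ∀ a b, Commute (e a) (e b))
    (I : Finset B₁) (K : Finset B₂) :
    idemProd e he (fjoin I K) =
      idemProd (fun c => e (Sum.inl c)) (fun _ _ => he _ _) I *
        idemProd (fun d => e (Sum.inr d)) (fun _ _ => he _ _) K := by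
  rw [idemProd, noncommProd_congr (compl_fjoin I K) (fun _ _ => rfl), noncommProd_fjoin e he,
    noncommProd_fjoin (fun c => 1 - e c) (fun a b => (Commute.one_left _).sub_left
      ((Commute.one_right _).sub_right (he a b))), idemProd, idemProd]
  refine Commute.mul_mul_mul_comm (noncommProd_commute _ _ _ _ fun c _ => ?_) _ _
  exact (noncommProd_commute _ _ _ _ fun d _ => (Commute.one_left _).sub_left (he _ _)).symm

theorem EOm_fjoin (M₁ : CoxeterMatrix B₁) (M₂ : CoxeterMatrix B₂) (I : Finset B₁)
    (K : Finset B₂) :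
    EOm k (prodMatrix M₁ M₂) (fjoin I K) =
      partialEOm k (prodMatrix M₁ M₂) Sum.inl I * partialEOm k (prodMatrix M₁ M₂) Sum.inr K :=
  idemProd_fjoin (eOm k _) (commute_eOm k _) I K

end Products

theorem statement12_general {B₁ B₂ : Type*} [Fintype B₁] [DecidableEq B₁] [Fintype B₂]
    [DecidableEq B₂] (M₁ : CoxeterMatrix B₁) (M₂ : CoxeterMatrix B₂)
    (f₁ : Omega ℤ M₁ →+* Omega ℤ (prodMatrix M₁ M₂))
    (f₂ : Omega ℤ M₂ →+* Omega ℤ (prodMatrix M₁ M₂))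
    (h₁ : Parab1Cond ℤ M₁ M₂ ⇑f₁) (h₂ : Parab2Cond ℤ M₁ M₂ ⇑f₂)
    (I J : Finset B₁) (hIJ : Transversal M₁ I J) (s : B₁) (hs : s ∈ I \ J)
    (K L : Finset B₂) (hKL : Transversal M₂ K L) (u : B₂) (hu : u ∈ K \ L) :
    XOm ℤ (prodMatrix M₁ M₂) (fjoin I K) (fjoin J K) (Sum.inl s) *
        XOm ℤ (prodMatrix M₁ M₂) (fjoin J K) (fjoin J L) (Sum.inr u) =
      XOm ℤ (prodMatrix M₁ M₂) (fjoin I K) (fjoin I L) (Sum.inr u) *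
        XOm ℤ (prodMatrix M₁ M₂) (fjoin I L) (fjoin J L) (Sum.inl s) ∧
    f₁ (XOm ℤ M₁ I J s) * f₂ (XOm ℤ M₂ K L u) =
      XOm ℤ (prodMatrix M₁ M₂) (fjoin I K) (fjoin J K) (Sum.inl s) *
        XOm ℤ (prodMatrix M₁ M₂) (fjoin J K) (fjoin J L) (Sum.inr u) ∧
    f₂ (XOm ℤ M₂ K L u) * f₁ (XOm ℤ M₁ I J s) =
      XOm ℤ (prodMatrix M₁ M₂) (fjoin I K) (fjoin I L) (Sum.inr u) *
        XOm ℤ (prodMatrix M₁ M₂) (fjoin I L) (fjoin J L) (Sum.inl s) ∧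
    Commute (f₁ (XOm ℤ M₁ I J s)) (f₂ (XOm ℤ M₂ K L u)) := by
  obtain ⟨s₁, hs₁⟩ := hIJ.2
  obtain ⟨t₁, ht₁⟩ := hKL.2
  have hM : ∀ c d, prodMatrix M₁ M₂ (Sum.inl c) (Sum.inr d) = 2 := fun _ _ => rfl
  have hM' : ∀ d c, prodMatrix M₁ M₂ (Sum.inr d) (Sum.inl c) = 2 := fun _ _ => rfl
  have hsI := (Finset.mem_sdiff.1 hs).1
  have huK := (Finset.mem_sdiff.1 hu).1
  have hZZ' := commute_partialXOm_partialXOm (k := ℤ) hM hsI hs₁ huK ht₁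
  have hleft : XOm ℤ (prodMatrix M₁ M₂) (fjoin I K) (fjoin J K) (Sum.inl s) *
      XOm ℤ (prodMatrix M₁ M₂) (fjoin J K) (fjoin J L) (Sum.inr u) =
      partialXOm ℤ _ Sum.inl I J s * partialXOm ℤ _ Sum.inr K L u := by
    rw [XOm, XOm, EOm_fjoin, EOm_fjoin, EOm_fjoin]
    exact mul_sandwich_eq isIdempotentElem_partialEOm isIdempotentElem_partialEOm
      (commute_partialEOm K) (commute_partialEOm K) (commute_partialEOm L)
      (commute_partialXOm_partialEOm hM hsI hs₁ K) (commute_partialXOm_partialEOm hM' huK ht₁ J)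
  have hright : XOm ℤ (prodMatrix M₁ M₂) (fjoin I K) (fjoin I L) (Sum.inr u) *
      XOm ℤ (prodMatrix M₁ M₂) (fjoin I L) (fjoin J L) (Sum.inl s) =
      partialXOm ℤ _ Sum.inr K L u * partialXOm ℤ _ Sum.inl I J s := by
    rw [XOm, XOm, EOm_fjoin, EOm_fjoin, EOm_fjoin, (commute_partialEOm (I := I) K).eq,
      (commute_partialEOm (I := I) L).eq, (commute_partialEOm (I := J) L).eq]
    exact mul_sandwich_eq isIdempotentElem_partialEOm isIdempotentElem_partialEOm
      (commute_partialEOm I) (commute_partialEOm I) (commute_partialEOm J)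
      (commute_partialXOm_partialEOm hM' huK ht₁ I) (commute_partialXOm_partialEOm hM hsI hs₁ L)
  rw [map_XOm f₁ h₁, map_XOm f₂ h₂, hleft, hright]
  exact ⟨hZZ'.eq, rfl, rfl, hZZ'⟩

/-- for transversal edges `I ⇆ J` in `Q_{W₁}` and `K ⇆ L` in `Q_{W₂}`,
`X_{I⊔K, J⊔K} X_{J⊔K, J⊔L} = X_{I⊔K, I⊔L} X_{I⊔L, J⊔L}` holds in `Ω(W,S)`; the left side
is `ι₁(X_{IJ}) ι₂(X_{KL})` and the right side is `ι₂(X_{KL}) ι₁(X_{IJ})`, so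
`[ι₁(X_{IJ}), ι₂(X_{KL})] = 0`. -/
theorem statement12 {B₁ B₂ : Type*} [Fintype B₁] [DecidableEq B₁] [Fintype B₂]
    [DecidableEq B₂] (M₁ : CoxeterMatrix B₁) (M₂ : CoxeterMatrix B₂)
    {W₁ W₂ : Type*} [Group W₁] [Group W₂] [Finite W₁] [Finite W₂]
    (cs₁ : CoxeterSystem M₁ W₁) (cs₂ : CoxeterSystem M₂ W₂)
    (cs : CoxeterSystem (prodMatrix M₁ M₂) (W₁ × W₂))
    (f₁ : Omega ℤ M₁ →+* Omega ℤ (prodMatrix M₁ M₂))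
    (f₂ : Omega ℤ M₂ →+* Omega ℤ (prodMatrix M₁ M₂))
    (h₁ : Parab1Cond ℤ M₁ M₂ ⇑f₁) (h₂ : Parab2Cond ℤ M₁ M₂ ⇑f₂)
    (I J : Finset B₁) (hIJ : Transversal M₁ I J) (s : B₁) (hs : s ∈ I \ J)
    (K L : Finset B₂) (hKL : Transversal M₂ K L) (u : B₂) (hu : u ∈ K \ L) :
    XOm ℤ (prodMatrix M₁ M₂) (fjoin I K) (fjoin J K) (Sum.inl s) *
        XOm ℤ (prodMatrix M₁ M₂) (fjoin J K) (fjoin J L) (Sum.inr u) =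
      XOm ℤ (prodMatrix M₁ M₂) (fjoin I K) (fjoin I L) (Sum.inr u) *
        XOm ℤ (prodMatrix M₁ M₂) (fjoin I L) (fjoin J L) (Sum.inl s) ∧
    f₁ (XOm ℤ M₁ I J s) * f₂ (XOm ℤ M₂ K L u) =
      XOm ℤ (prodMatrix M₁ M₂) (fjoin I K) (fjoin J K) (Sum.inl s) *
        XOm ℤ (prodMatrix M₁ M₂) (fjoin J K) (fjoin J L) (Sum.inr u) ∧
    f₂ (XOm ℤ M₂ K L u) * f₁ (XOm ℤ M₁ I J s) =
      XOm ℤ (prodMatrix M₁ M₂) (fjoin I K) (fjoin I L) (Sum.inr u) *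
        XOm ℤ (prodMatrix M₁ M₂) (fjoin I L) (fjoin J L) (Sum.inl s) ∧
    Commute (f₁ (XOm ℤ M₁ I J s)) (f₂ (XOm ℤ M₂ K L u)) :=
  statement12_general M₁ M₂ f₁ f₂ h₁ h₂ I J hIJ s hs K L hKL u hu

end WGraphPaper

end
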